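/- arXiv:1812.10104 — 3 statements merged into one kernel-verified Lean document; each statement's English description precedes it below -/
import Mathlib

section
/- The differential of the relative atomic complex squares to zero: for every subset σ of atoms, ∂(∂σ) = 0, where ∂σ = Σ_j (-1)^j (σ \ {a_{i_j}}) with the sum over indices j such that join(σ \ {a_{i_j}}) = join(σ). -/
open Classical Finset

/-- The differential of the relative atomic complex on the basis element `σ`:
`∂σ = Σ_j (-1)^j (σ \ {a_{i_j}})`, summed over those `j ∈ σ` whose removal does
not change the join. -/
noncomputable def atomicBdry {α : Type*} [Lattice α] [OrderBot α] {N : ℕ}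
    (a : Fin N → α) (σ : Finset (Fin N)) : Finset (Fin N) →₀ ℤ :=
  ∑ j ∈ σ.filter (fun j => (σ.erase j).sup a = σ.sup a),
    ((-1 : ℤ) ^ ((σ.filter (· < j)).card)) • Finsupp.single (σ.erase j) (1 : ℤ)

/-- The differential of the relative atomic complex, as a linear endomorphism of
the free abelian group on subsets of atoms. -/
noncomputable def atomicD {α : Type*} [Lattice α] [OrderBot α] {N : ℕ}
    (a : Fin N → α) : (Finset (Fin N) →₀ ℤ) →ₗ[ℤ] (Finset (Fin N) →₀ ℤ) :=
  Finsupp.lsum ℤ fun σ =>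
    LinearMap.toSpanSingleton ℤ (Finset (Fin N) →₀ ℤ) (atomicBdry a σ)

/-!
Expanding `∂ (∂ σ)` gives a sum over ordered pairs `(j, i)` of distinct elements of `σ` such that
removing `j` and then `i` keeps the join. Since the join is monotone, this condition just says that
`σ \ {i, j}` has the join of `σ`, which is symmetric in `i` and `j`. The sign of `(j, i)` is
`(-1)^(#{k ∈ σ | k < j} + #{k ∈ σ \ {j} | k < i})`, and exactly one of the two orders loses a
count of one, so the terms for `(j, i)` and `(i, j)` cancel.
-/

lemma sup_erase_eq_and_sup_erase_erase_eq_iff {ι α : Type*} [DecidableEq ι] [SemilatticeSup α]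
    [OrderBot α] (f : ι → α) (σ : Finset ι) (i j : ι) :
    (σ.erase j).sup f = σ.sup f ∧ ((σ.erase j).erase i).sup f = (σ.erase j).sup f ↔
      ((σ.erase j).erase i).sup f = σ.sup f := by
  refine ⟨fun h => h.2.trans h.1, fun h => ?_⟩
  have hj : (σ.erase j).sup f = σ.sup f :=
    le_antisymm (sup_mono (erase_subset j σ)) (h ▸ sup_mono (erase_subset i _))
  exact ⟨hj, h.trans hj.symm⟩

section Sign

variable {β : Type*} [LinearOrder β]

lemma filter_lt_erase_of_le (σ : Finset β) {i j : β} (h : j ≤ i) :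
    (σ.erase i).filter (· < j) = σ.filter (· < j) := by
  rw [filter_erase, erase_eq_of_notMem (by simp [h.not_gt])]

lemma card_filter_lt_erase_add_one {σ : Finset β} {i j : β} (hi : i ∈ σ) (h : i < j) :
    ((σ.erase i).filter (· < j)).card + 1 = (σ.filter (· < j)).card := by
  rw [filter_erase, card_erase_add_one (by simp [hi, h])]

lemma neg_one_pow_card_filter_lt_erase_add_swap {σ : Finset β} {i j : β} (hi : i ∈ σ)
    (hj : j ∈ σ) (hij : i ≠ j) :
    (-1 : ℤ) ^ (σ.filter (· < j)).card * (-1) ^ ((σ.erase j).filter (· < i)).card +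
      (-1) ^ (σ.filter (· < i)).card * (-1) ^ ((σ.erase i).filter (· < j)).card = 0 := by
  wlog h : i < j generalizing i j
  · rw [add_comm]
    exact this hj hi hij.symm (lt_of_le_of_ne (not_lt.1 h) hij.symm)
  rw [filter_lt_erase_of_le σ h.le, ← card_filter_lt_erase_add_one hi h]
  ring

end Sign

section Differential

variable {α : Type*} [Lattice α] [OrderBot α] {N : ℕ} (a : Fin N → α)

lemma atomicD_single (σ : Finset (Fin N)) :
    atomicD a (Finsupp.single σ 1) = atomicBdry a σ := by
  simp [atomicD]

lemma atomicD_atomicBdry (σ : Finset (Fin N)) : atomicD a (atomicBdry a σ) = 0 := by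
  simp only [atomicBdry, map_sum, map_zsmul, atomicD_single, smul_sum, smul_smul]
  rw [sum_sigma']
  refine sum_involution (fun p _ => ⟨p.2, p.1⟩) ?_ ?_ ?_ (fun _ _ => rfl)
  · rintro ⟨j, i⟩ hp
    simp only [mem_sigma, mem_filter, mem_erase] at hp
    obtain ⟨⟨hj, -⟩, ⟨hij, hi⟩, -⟩ := hp
    dsimp only
    rw [erase_right_comm (s := σ) (a := i), ← add_smul,
      neg_one_pow_card_filter_lt_erase_add_swap hi hj hij, zero_smul]
  · rintro ⟨j, i⟩ hp _ h
    simp only [mem_sigma, mem_filter, mem_erase] at hp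
    exact hp.2.1.1 (congrArg Sigma.fst h)
  · rintro ⟨j, i⟩ hp
    simp only [mem_sigma, mem_filter, mem_erase] at hp ⊢
    obtain ⟨⟨hj, hσj⟩, ⟨hij, hi⟩, hσji⟩ := hp
    have hσij := (sup_erase_eq_and_sup_erase_erase_eq_iff a σ i j).1 ⟨hσj, hσji⟩
    rw [erase_right_comm] at hσij
    obtain ⟨hσi, hσij_erase⟩ := (sup_erase_eq_and_sup_erase_erase_eq_iff a σ j i).2 hσij
    exact ⟨⟨hi, hσi⟩, ⟨hij.symm, hj⟩, hσij_erase⟩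

end Differential

theorem stmt_6_general {α : Type*} [Lattice α] [OrderBot α] {N : ℕ}
    (a : Fin N → α) :
    (atomicD a).comp (atomicD a) = 0 := by
  refine Finsupp.lhom_ext' fun σ => LinearMap.ext_ring ?_
  simp [atomicD_single, atomicD_atomicBdry]

/-- The differential of the relative atomic complex squares to zero. -/
theorem stmt_6 {α : Type*} [Lattice α] [OrderBot α] [Fintype α] {N : ℕ}
    (a : Fin N → α) (ha : ∀ i, IsAtom (a i)) :
    (atomicD a).comp (atomicD a) = 0 :=
  stmt_6_general a
end

section
/- The cohomology of the DGA D̃ for the four-plane arrangement of the example, with Z/2 coefficients, satisfies: H^0(D̃) ≅ Z/2, H^1(D̃) ≅ (Z/2)^9, and H^k(D̃) = 0 for k ≥ 2. -/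
open Classical Finset Module

/-- The four planes of the example (indices `0,1,2,3` stand for `H₁,…,H₄`). -/
def planeSet : Fin 4 → Set (Fin 4 → ℝ)
  | 0 => {v | v 0 = v 2 ∧ v 1 = v 3}
  | 1 => {v | v 0 = v 2 ∧ v 1 = -v 3}
  | 2 => {v | v 0 = -v 2 ∧ v 1 = -v 3}
  | 3 => {v | v 0 = -v 2 ∧ v 1 = v 3}

/-- The coboundary of `D̃` over `ℤ/2` on a basis element. -/
noncomputable def dualBdry {W : Type*} [AddCommGroup W] [Module ℝ W] {N : ℕ}
    (H : Fin N → Submodule ℝ W) (σ : Finset (Fin N)) : Finset (Fin N) →₀ ZMod 2 :=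
  ∑ j ∈ σ.filter (fun j => (σ.erase j).inf H = σ.inf H),
    Finsupp.single (σ.erase j) (1 : ZMod 2)

/-- The coboundary `δ` of `D̃` as a `ℤ/2`-linear endomorphism. -/
noncomputable def dualD {W : Type*} [AddCommGroup W] [Module ℝ W] {N : ℕ}
    (H : Fin N → Submodule ℝ W) :
    (Finset (Fin N) →₀ ZMod 2) →ₗ[ZMod 2] (Finset (Fin N) →₀ ZMod 2) :=
  Finsupp.lsum (ZMod 2) fun σ =>
    LinearMap.toSpanSingleton (ZMod 2) (Finset (Fin N) →₀ ZMod 2) (dualBdry H σ)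

/-- The degree `deg σ = dim W − |σ| − dim (join σ)` of a basis element of `D̃`. -/
noncomputable def dualDeg {W : Type*} [AddCommGroup W] [Module ℝ W] {N : ℕ}
    (H : Fin N → Submodule ℝ W) (σ : Finset (Fin N)) : ℤ :=
  (finrank ℝ W : ℤ) - σ.card - finrank ℝ ↥(σ.inf H)

/-- The degree-`k` component of `D̃`. -/
noncomputable def dualComp {W : Type*} [AddCommGroup W] [Module ℝ W] {N : ℕ}
    (H : Fin N → Submodule ℝ W) (k : ℤ) :
    Submodule (ZMod 2) (Finset (Fin N) →₀ ZMod 2) :=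
  Finsupp.supported (ZMod 2) (ZMod 2) {σ | dualDeg H σ = k}

/-- The degree-`k` cocycles of `D̃`. -/
noncomputable def dualZ {W : Type*} [AddCommGroup W] [Module ℝ W] {N : ℕ}
    (H : Fin N → Submodule ℝ W) (k : ℤ) :
    Submodule (ZMod 2) (Finset (Fin N) →₀ ZMod 2) :=
  dualComp H k ⊓ LinearMap.ker (dualD H)

/-- The degree-`k` coboundaries of `D̃`. -/
noncomputable def dualB {W : Type*} [AddCommGroup W] [Module ℝ W] {N : ℕ}
    (H : Fin N → Submodule ℝ W) (k : ℤ) :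
    Submodule (ZMod 2) (Finset (Fin N) →₀ ZMod 2) :=
  dualComp H k ⊓ Submodule.map (dualD H) (dualComp H (k - 1))

/-- The degree-`k` cohomology `H^k(D̃)` = cocycles modulo coboundaries. -/
noncomputable abbrev dualH {W : Type*} [AddCommGroup W] [Module ℝ W] {N : ℕ}
    (H : Fin N → Submodule ℝ W) (k : ℤ) :=
  @HasQuotient.Quotient ↥(dualZ H k) (Submodule (ZMod 2) ↥(dualZ H k))
    Submodule.hasQuotient (Submodule.comap (dualZ H k).subtype (dualB H k))

/-!
In the coordinates `x₁ - x₂, x₁ + x₂, y₁ - y₂, y₁ + y₂` every plane `Hᵢ` is a coordinate plane, the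
common zero set of the two forms indexed by `formSupport i`. So the join of `σ` is a coordinate
subspace of dimension `4 - |⋃_{i ∈ σ} formSupport i|`, and degrees and coboundary of `D̃` become a
finite computation: `δ` vanishes except on the four triples, each sent to the diagonal pair
(`{0,2}` or `{1,3}`) it contains, and on `{0,1,2,3}`, sent to the sum of the four triples.
Hence `H⁰` is spanned by `∅`; in degree 1 the eight singletons and adjacent pairs are cocycles,
the cocycles among combinations of triples form a plane containing the one coboundary
`δ{0,1,2,3}`, giving `8 + 1` dimensions; and in degree 2 the triples hit both diagonal pairs.
-/

section CoordinateSubspace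

variable (K : Type*) [Field K] {ι : Type*}

noncomputable def coordKernel (s : Finset ι) : Submodule K (ι → K) :=
  ⨅ a ∈ (s : Set ι), LinearMap.ker (LinearMap.proj a)

variable {K}

theorem mem_coordKernel {s : Finset ι} {v : ι → K} : v ∈ coordKernel K s ↔ ∀ a ∈ s, v a = 0 := by
  simp [coordKernel]

theorem finrank_coordKernel [Fintype ι] (s : Finset ι) :
    finrank K (coordKernel K s) = Fintype.card ι - s.card := by
  rw [coordKernel, (LinearMap.iInfKerProjEquiv K (fun _ : ι => K) disjoint_compl_left
    (by simp) : _ ≃ₗ[K] ((↑s : Set ι)ᶜ : Set ι) → K).finrank_eq, ← Finset.card_compl]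
  simp [Finset.compl_eq_univ_sdiff, Finset.filter_not]

theorem coordKernel_biUnion [DecidableEq ι] {κ : Type*} (σ : Finset κ) (F : κ → Finset ι) :
    coordKernel K (σ.biUnion F) = σ.inf (coordKernel K ∘ F) := by
  ext v
  simp only [mem_coordKernel, Submodule.mem_finsetInf, Function.comp, Finset.mem_biUnion]
  aesop

end CoordinateSubspace

section Arrangement

variable {W : Type*} [AddCommGroup W] [Module ℝ W] {N : ℕ} (H : Fin N → Submodule ℝ W)

theorem dualD_apply (x : Finset (Fin N) →₀ ZMod 2) :
    dualD H x = ∑ σ, x σ • dualBdry H σ := by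
  rw [dualD, Finsupp.lsum_apply, Finsupp.sum_fintype _ _ (by simp)]
  rfl

theorem mem_dualComp_iff {k : ℤ} {x : Finset (Fin N) →₀ ZMod 2} :
    x ∈ dualComp H k ↔ ∀ σ, dualDeg H σ ≠ k → x σ = 0 :=
  Finsupp.mem_supported' _ _

theorem single_mem_dualComp {σ : Finset (Fin N)} (c : ZMod 2) :
    Finsupp.single σ c ∈ dualComp H (dualDeg H σ) :=
  Finsupp.single_mem_supported _ _ rfl

theorem eq_sum_single_of_mem_dualComp {k : ℤ} {x : Finset (Fin N) →₀ ZMod 2}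
    (hx : x ∈ dualComp H k) {S : Finset (Finset (Fin N))} (hS : ∀ σ, dualDeg H σ = k → σ ∈ S) :
    x = ∑ σ ∈ S, Finsupp.single σ (x σ) := by
  conv_lhs => rw [← Finsupp.univ_sum_single x]
  refine (Finset.sum_subset (Finset.subset_univ S) fun σ _ hσ => ?_).symm
  rw [(mem_dualComp_iff H).1 hx σ (mt (hS σ) hσ), Finsupp.single_zero]

theorem dualComp_eq_bot {k : ℤ} (hk : ∀ σ, dualDeg H σ ≠ k) : dualComp H k = ⊥ := by
  rw [eq_bot_iff]
  intro x hx
  ext σ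
  exact (mem_dualComp_iff H).1 hx σ (hk σ)

theorem inf_erase_eq_iff_finrank_eq [FiniteDimensional ℝ W] (σ : Finset (Fin N)) (j : Fin N) :
    (σ.erase j).inf H = σ.inf H ↔ finrank ℝ ↥((σ.erase j).inf H) = finrank ℝ ↥(σ.inf H) :=
  ⟨fun h => h ▸ rfl, fun h =>
    (Submodule.eq_of_le_of_finrank_eq (Finset.inf_mono (σ.erase_subset j)) h.symm).symm⟩

end Arrangement

section QuotientOfSubmodules

variable {R V U : Type*} [Ring R] [AddCommGroup V] [Module R V] [AddCommGroup U] [Module R U]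
  {Z B : Submodule R V}

theorem nonempty_quotient_comap_subtype_equiv (φ : V →ₗ[R] U) (hker : ∀ x ∈ Z, φ x = 0 ↔ x ∈ B)
    (hsurj : ∀ u, ∃ x ∈ Z, φ x = u) : Nonempty ((Z ⧸ B.comap Z.subtype) ≃ₗ[R] U) := by
  let ψ := φ ∘ₗ Z.subtype
  have hψ : LinearMap.ker ψ = B.comap Z.subtype := by
    ext ⟨x, hx⟩
    exact hker x hx
  have hψsurj : Function.Surjective ψ := fun u =>
    let ⟨x, hx, hxu⟩ := hsurj u
    ⟨⟨x, hx⟩, hxu⟩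
  exact ⟨(Submodule.quotEquivOfEq _ _ hψ.symm).trans (ψ.quotKerEquivOfSurjective hψsurj)⟩

theorem subsingleton_quotient_comap_subtype (h : Z ≤ B) :
    Subsingleton (Z ⧸ B.comap Z.subtype) := by
  rw [Submodule.Quotient.subsingleton_iff, eq_top_iff]
  exact fun x _ => h x.2

end QuotientOfSubmodules

noncomputable def planeForms : (Fin 4 → ℝ) →ₗ[ℝ] (Fin 4 → ℝ) where
  toFun v := ![v 0 - v 2, v 0 + v 2, v 1 - v 3, v 1 + v 3]
  map_add' v w := by ext i; fin_cases i <;> simp [add_sub_add_comm, add_add_add_comm]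
  map_smul' c v := by ext i; fin_cases i <;> simp [mul_sub, mul_add]

theorem planeForms_injective : Function.Injective planeForms :=
  Function.LeftInverse.injective
    (g := fun u => ![(u 0 + u 1) / 2, (u 2 + u 3) / 2, (u 1 - u 0) / 2, (u 3 - u 2) / 2])
    fun v => by ext i; fin_cases i <;> simp [planeForms]

def formSupport : Fin 4 → Finset (Fin 4) := ![{0, 2}, {0, 3}, {1, 3}, {1, 2}]

theorem planeSet_eq (i : Fin 4) :
    planeSet i = planeForms ⁻¹' (coordKernel ℝ (formSupport i) : Set (Fin 4 → ℝ)) := by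
  ext v
  fin_cases i <;>
    simp [planeSet, formSupport, mem_coordKernel, planeForms, sub_eq_zero,
      add_eq_zero_iff_eq_neg]

def joinDim (σ : Finset (Fin 4)) : ℕ := 4 - (σ.biUnion formSupport).card

noncomputable def tripleSum : Finset (Fin 4) →₀ ZMod 2 :=
  Finsupp.single {1, 2, 3} 1 + Finsupp.single {0, 2, 3} 1 + Finsupp.single {0, 1, 3} 1 +
    Finsupp.single {0, 1, 2} 1

noncomputable def h1Coords : (Finset (Fin 4) →₀ ZMod 2) →ₗ[ZMod 2] (Fin 9 → ZMod 2) :=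
  LinearMap.pi ![Finsupp.lapply {0}, Finsupp.lapply {1}, Finsupp.lapply {2}, Finsupp.lapply {3},
    Finsupp.lapply {0, 1}, Finsupp.lapply {1, 2}, Finsupp.lapply {2, 3}, Finsupp.lapply {0, 3},
    Finsupp.lapply {0, 1, 2} + Finsupp.lapply {0, 1, 3}]

theorem h1Coords_tripleSum : h1Coords tripleSum = 0 := by
  ext i
  fin_cases i <;> simp +decide [h1Coords, tripleSum]

section FourPlanes

variable {H : Fin 4 → Submodule ℝ (Fin 4 → ℝ)}
  (hH : ∀ i, (H i : Set (Fin 4 → ℝ)) = planeSet i)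
include hH

theorem inf_eq_comap_coordKernel (σ : Finset (Fin 4)) :
    σ.inf H = (coordKernel ℝ (σ.biUnion formSupport)).comap planeForms := by
  ext v
  rw [Submodule.mem_finsetInf, Submodule.mem_comap, coordKernel_biUnion, Submodule.mem_finsetInf]
  refine forall₂_congr fun i _ => ?_
  rw [← SetLike.mem_coe, hH, planeSet_eq]
  rfl

theorem finrank_inf (σ : Finset (Fin 4)) :
    finrank ℝ ↥(σ.inf H) = joinDim σ := by
  let e := LinearEquiv.ofInjectiveEndo planeForms planeForms_injective
  rw [inf_eq_comap_coordKernel hH, show planeForms = (e : (Fin 4 → ℝ) →ₗ[ℝ] _) from rfl,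
    Submodule.comap_equiv_eq_map_symm, LinearEquiv.finrank_map_eq, finrank_coordKernel,
    Fintype.card_fin, joinDim]

theorem dualDeg_eq (σ : Finset (Fin 4)) : dualDeg H σ = 4 - σ.card - joinDim σ := by
  simp [dualDeg, finrank_inf hH]

theorem single_mem_dualComp_of_eq {σ : Finset (Fin 4)} {k : ℤ} (h : 4 - σ.card - joinDim σ = k)
    (c : ZMod 2) : Finsupp.single σ c ∈ dualComp H k := by
  rw [← h, ← dualDeg_eq hH]
  exact single_mem_dualComp H c

theorem dualBdry_eq (σ : Finset (Fin 4)) :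
    dualBdry H σ = ∑ j ∈ σ.filter (fun j => joinDim (σ.erase j) = joinDim σ),
      Finsupp.single (σ.erase j) 1 := by
  refine Finset.sum_congr (Finset.filter_congr fun j _ => ?_) fun _ _ => rfl
  rw [inf_erase_eq_iff_finrank_eq, finrank_inf hH, finrank_inf hH]

theorem dualBdry_eq_zero {σ : Finset (Fin 4)}
    (hσ : σ ∉ ({{0, 1, 2}, {0, 2, 3}, {0, 1, 3}, {1, 2, 3}, {0, 1, 2, 3}} :
      Finset (Finset (Fin 4)))) :
    dualBdry H σ = 0 := by
  have hfilter : ∀ τ : Finset (Fin 4),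
      τ ∉ ({{0, 1, 2}, {0, 2, 3}, {0, 1, 3}, {1, 2, 3}, {0, 1, 2, 3}} : Finset (Finset (Fin 4))) →
      τ.filter (fun j => joinDim (τ.erase j) = joinDim τ) = ∅ := by
    decide
  rw [dualBdry_eq hH, hfilter σ hσ, Finset.sum_empty]

theorem dualBdry_triple_and_full :
    dualBdry H {0, 1, 2} = Finsupp.single {0, 2} 1 ∧
      dualBdry H {0, 2, 3} = Finsupp.single {0, 2} 1 ∧
      dualBdry H {0, 1, 3} = Finsupp.single {1, 3} 1 ∧
      dualBdry H {1, 2, 3} = Finsupp.single {1, 3} 1 ∧ dualBdry H {0, 1, 2, 3} = tripleSum := by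
  simp +decide [dualBdry_eq hH, Finset.filter_insert, Finset.filter_singleton, joinDim,
    Finset.erase_insert_eq_erase, Finset.erase_insert_of_ne, tripleSum, add_assoc]

theorem dualD_eq (x : Finset (Fin 4) →₀ ZMod 2) :
    dualD H x = (x {0, 1, 2} + x {0, 2, 3}) • Finsupp.single {0, 2} 1 +
      (x {0, 1, 3} + x {1, 2, 3}) • Finsupp.single {1, 3} 1 + x {0, 1, 2, 3} • tripleSum := by
  obtain ⟨h012, h023, h013, h123, hfull⟩ := dualBdry_triple_and_full hH
  rw [dualD_apply, ← Finset.sum_subset (Finset.subset_univ _)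
    fun σ _ hσ => by rw [dualBdry_eq_zero hH hσ, smul_zero]]
  rw [Finset.sum_insert (by decide), Finset.sum_insert (by decide), Finset.sum_insert (by decide),
    Finset.sum_insert (by decide), Finset.sum_singleton, h012, h023, h013, h123, hfull]
  module

theorem mem_ker_dualD_iff {x : Finset (Fin 4) →₀ ZMod 2} :
    x ∈ LinearMap.ker (dualD H) ↔
      x {0, 1, 2} = x {0, 2, 3} ∧ x {0, 1, 3} = x {1, 2, 3} ∧ x {0, 1, 2, 3} = 0 := by
  rw [LinearMap.mem_ker, dualD_eq hH]
  constructor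
  · intro h
    have h02 := DFunLike.congr_fun h {0, 2}
    have h13 := DFunLike.congr_fun h {1, 3}
    have h012 := DFunLike.congr_fun h {0, 1, 2}
    simp +decide [tripleSum] at h02 h13 h012
    exact ⟨CharTwo.add_eq_zero.1 h02, CharTwo.add_eq_zero.1 h13, h012⟩
  · rintro ⟨h02, h13, hfull⟩
    simp [h02, h13, hfull, CharTwo.add_self_eq_zero]

theorem dualD_eq_smul_tripleSum {y : Finset (Fin 4) →₀ ZMod 2} (hy : y ∈ dualComp H 0) :
    dualD H y = y {0, 1, 2, 3} • tripleSum := by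
  have hzero := (mem_dualComp_iff H).1 hy
  simp only [dualDeg_eq hH] at hzero
  rw [dualD_eq hH, hzero {0, 1, 2} (by decide), hzero {0, 2, 3} (by decide),
    hzero {0, 1, 3} (by decide), hzero {1, 2, 3} (by decide)]
  simp

theorem mem_dualB_one_iff {x : Finset (Fin 4) →₀ ZMod 2} :
    x ∈ dualB H 1 ↔ x ∈ dualComp H 1 ∧ ∃ c : ZMod 2, x = c • tripleSum := by
  refine and_congr_right fun _ => ⟨?_, ?_⟩
  · rintro ⟨y, hy, rfl⟩
    exact ⟨_, dualD_eq_smul_tripleSum hH hy⟩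
  · rintro ⟨c, rfl⟩
    have hfull : Finsupp.single {0, 1, 2, 3} c ∈ dualComp H (1 - 1) :=
      single_mem_dualComp_of_eq hH (by decide) c
    refine ⟨_, hfull, ?_⟩
    rw [dualD_eq_smul_tripleSum hH hfull, Finsupp.single_eq_same]

theorem dualB_zero : dualB H 0 = ⊥ := by
  rw [dualB, dualComp_eq_bot H (k := 0 - 1) (by simp only [dualDeg_eq hH]; decide),
    Submodule.map_bot, inf_bot_eq]

theorem eq_single_empty_of_mem_dualZ_zero {x : Finset (Fin 4) →₀ ZMod 2} (hx : x ∈ dualZ H 0) :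
    x = Finsupp.single ∅ (x ∅) := by
  obtain ⟨hcomp, hker⟩ := Submodule.mem_inf.1 hx
  have hfull := ((mem_ker_dualD_iff hH).1 hker).2.2
  rw [eq_sum_single_of_mem_dualComp H hcomp (S := {∅, {0, 1, 2, 3}})
    (by simp only [dualDeg_eq hH]; decide), Finset.sum_pair (by decide)]
  simp [hfull]

theorem nonempty_dualH_zero_equiv : Nonempty (dualH H 0 ≃ₗ[ZMod 2] ZMod 2) := by
  refine nonempty_quotient_comap_subtype_equiv (Finsupp.lapply ∅) (fun x hx => ?_) fun c => ?_
  · rw [dualB_zero hH, Submodule.mem_bot, Finsupp.lapply_apply]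
    exact ⟨fun h => by rw [eq_single_empty_of_mem_dualZ_zero hH hx, h, Finsupp.single_zero],
      fun h => by rw [h, Finsupp.zero_apply]⟩
  · refine ⟨Finsupp.single ∅ c, Submodule.mem_inf.2
      ⟨single_mem_dualComp_of_eq hH (by decide) c, ?_⟩, by simp⟩
    rw [mem_ker_dualD_iff hH]
    simp +decide

theorem eq_smul_tripleSum_of_h1Coords_eq_zero {x : Finset (Fin 4) →₀ ZMod 2} (hx : x ∈ dualZ H 1)
    (h : h1Coords x = 0) : x = x {0, 1, 2} • tripleSum := by
  obtain ⟨hcomp, hker⟩ := Submodule.mem_inf.1 hx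
  obtain ⟨h023, h123, -⟩ := (mem_ker_dualD_iff hH).1 hker
  have hcoord := fun i => congrFun h i
  simp only [h1Coords, LinearMap.pi_apply, Pi.zero_apply, Fin.forall_fin_succ,
    Matrix.cons_val_zero, Matrix.cons_val_succ, Matrix.cons_val_fin_one, Finsupp.lapply_apply,
    LinearMap.add_apply, forall_const] at hcoord
  obtain ⟨h0, h1, h2, h3, h01, h12, h23, h03, h013⟩ := hcoord
  rw [CharTwo.add_eq_zero] at h013
  conv_lhs => rw [eq_sum_single_of_mem_dualComp H hcomp (S := {{0}, {1}, {2}, {3}, {0, 1},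
    {1, 2}, {2, 3}, {0, 3}, {0, 1, 2}, {0, 2, 3}, {0, 1, 3}, {1, 2, 3}})
    (by simp only [dualDeg_eq hH]; decide)]
  simp +decide only [Finset.sum_insert, Finset.mem_insert, Finset.mem_singleton,
    Finset.sum_singleton, h0, h1, h2, h3, h01, h12, h23, h03, Finsupp.single_zero, zero_add,
    ← h023, ← h123, ← h013, tripleSum, smul_add, Finsupp.smul_single_one]
  abel

theorem nonempty_dualH_one_equiv : Nonempty (dualH H 1 ≃ₗ[ZMod 2] (Fin 9 → ZMod 2)) := by
  refine nonempty_quotient_comap_subtype_equiv h1Coords (fun x hx => ?_) fun u => ?_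
  · rw [mem_dualB_one_iff hH, and_iff_right (Submodule.mem_inf.1 hx).1]
    refine ⟨fun h => ⟨_, eq_smul_tripleSum_of_h1Coords_eq_zero hH hx h⟩, ?_⟩
    rintro ⟨c, rfl⟩
    rw [map_smul, h1Coords_tripleSum, smul_zero]
  · let x : Finset (Fin 4) →₀ ZMod 2 :=
      Finsupp.single {0} (u 0) + Finsupp.single {1} (u 1) + Finsupp.single {2} (u 2) +
        Finsupp.single {3} (u 3) + Finsupp.single {0, 1} (u 4) + Finsupp.single {1, 2} (u 5) +
        Finsupp.single {2, 3} (u 6) + Finsupp.single {0, 3} (u 7) +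
        Finsupp.single {0, 1, 2} (u 8) + Finsupp.single {0, 2, 3} (u 8)
    have hcomp : x ∈ dualComp H 1 := by
      repeat' apply add_mem
      all_goals exact single_mem_dualComp_of_eq hH (by decide) _
    have hker : x ∈ LinearMap.ker (dualD H) := by
      rw [mem_ker_dualD_iff hH]
      simp +decide [x]
    refine ⟨x, Submodule.mem_inf.2 ⟨hcomp, hker⟩, ?_⟩
    ext i
    fin_cases i <;> simp +decide [h1Coords, x]

theorem dualZ_le_dualB {k : ℤ} (hk : 2 ≤ k) : dualZ H k ≤ dualB H k := by
  intro x hx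
  obtain ⟨hcomp, -⟩ := Submodule.mem_inf.1 hx
  obtain rfl | hk := hk.eq_or_lt
  · have hy : Finsupp.single {0, 1, 2} (x {0, 2}) + Finsupp.single {0, 1, 3} (x {1, 3}) ∈
        dualComp H (2 - 1) :=
      add_mem (single_mem_dualComp_of_eq hH (by decide) _)
        (single_mem_dualComp_of_eq hH (by decide) _)
    refine Submodule.mem_inf.2 ⟨hcomp, _, hy, ?_⟩
    rw [eq_sum_single_of_mem_dualComp H hcomp (S := {{0, 2}, {1, 3}})
      (by simp only [dualDeg_eq hH]; decide), Finset.sum_pair (by decide), dualD_eq hH]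
    simp +decide
  · have hdeg : ∀ σ : Finset (Fin 4), 4 - (σ.card : ℤ) - joinDim σ ≤ 2 := by decide
    rw [dualComp_eq_bot H fun σ => by rw [dualDeg_eq hH]; linarith [hdeg σ]] at hcomp
    rw [(Submodule.mem_bot _).1 hcomp]
    exact zero_mem _

theorem subsingleton_dualH {k : ℤ} (hk : 2 ≤ k) : Subsingleton (dualH H k) :=
  subsingleton_quotient_comap_subtype (dualZ_le_dualB hH hk)

end FourPlanes

/-- The mod 2 cohomology of the DGA `D̃` of the four-plane example:
`H⁰ ≅ ℤ/2`, `H¹ ≅ (ℤ/2)⁹`, `H^k = 0` for `k ≥ 2`. -/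
theorem stmt_13 (H : Fin 4 → Submodule ℝ (Fin 4 → ℝ))
    (hH : ∀ i, (H i : Set (Fin 4 → ℝ)) = planeSet i) :
    Nonempty (dualH H 0 ≃ₗ[ZMod 2] ZMod 2) ∧
    Nonempty (dualH H 1 ≃ₗ[ZMod 2] (Fin 9 → ZMod 2)) ∧
    (∀ k : ℤ, 2 ≤ k → Subsingleton (dualH H k)) := by
  exact ⟨nonempty_dualH_zero_equiv hH, nonempty_dualH_one_equiv hH, fun _ => subsingleton_dualH hH⟩
end

section
/- In the DGA D̃ of the four-plane example over Z/2, all products of positive-degree cohomology classes vanish: for any two subsets σ, τ ⊆ {1,2,3,4} that are cocycles of degree ≥ 1 whose product σ∘τ is defined (σ∘τ = σ∪τ if join(σ)+join(τ) = R^4, else 0), the resulting class in H^*(D̃) is zero. -/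
open Classical Finset Module

/-- The product of `D̃` on basis elements: `σ∘τ = σ∪τ` if
`join(σ) + join(τ) = W`, and `0` otherwise. -/
noncomputable def dualMulAux {W : Type*} [AddCommGroup W] [Module ℝ W] {N : ℕ}
    (H : Fin N → Submodule ℝ W) (σ τ : Finset (Fin N)) : Finset (Fin N) →₀ ZMod 2 :=
  if σ.inf H ⊔ τ.inf H = ⊤ then Finsupp.single (σ ∪ τ) (1 : ZMod 2) else 0

/-- The product of `D̃`, extended bilinearly. -/
noncomputable def dualMul {W : Type*} [AddCommGroup W] [Module ℝ W] {N : ℕ}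
    (H : Fin N → Submodule ℝ W) :
    (Finset (Fin N) →₀ ZMod 2) →ₗ[ZMod 2]
      (Finset (Fin N) →₀ ZMod 2) →ₗ[ZMod 2] (Finset (Fin N) →₀ ZMod 2) :=
  Finsupp.lsum (ZMod 2) fun σ =>
    LinearMap.toSpanSingleton (ZMod 2) _
      (Finsupp.lsum (ZMod 2) fun τ =>
        LinearMap.toSpanSingleton (ZMod 2) (Finset (Fin N) →₀ ZMod 2)
          (dualMulAux H σ τ))

/-! Write `H i = {v | v 0 = s v 2 ∧ v 1 = t v 3}` with a sign pair `(s, t)`. Two such planes lying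
in a common hyperplane `v 0 = s v 2` or `v 1 = t v 3` cannot span `ℝ⁴`, so `H i + H k = ℝ⁴` forces
both signs to differ, which happens only for `k = i + 2`. A basis element of positive degree is
nonempty (`deg ∅ = 0`), hence a nonzero product `σ ∘ τ` has `σ = {i}`, `τ = {i + 2}`, and
`{i, i + 2} = δ {i, i + 1, i + 2}`: the three planes meet in `0`, and so do `H i, H (i + 2)`,
while adjacent planes meet in a line. -/

section Arrangement

variable {W : Type*} [AddCommGroup W] [Module ℝ W] {N : ℕ} (H : Fin N → Submodule ℝ W)

theorem dualD_single (σ : Finset (Fin N)) :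
    dualD H (Finsupp.single σ 1) = dualBdry H σ := by
  simp [dualD]

theorem dualMul_single_single (σ τ : Finset (Fin N)) :
    dualMul H (Finsupp.single σ 1) (Finsupp.single τ 1) = dualMulAux H σ τ := by
  simp [dualMul]

theorem dualDeg_empty : dualDeg H ∅ = 0 := by
  rw [dualDeg, Finset.inf_empty, finrank_top]; simp

theorem nonempty_of_one_le_dualDeg {σ : Finset (Fin N)} (hσ : 1 ≤ dualDeg H σ) :
    σ.Nonempty := by
  rw [Finset.nonempty_iff_ne_empty]
  rintro rfl
  rw [dualDeg_empty] at hσ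
  norm_num at hσ

theorem sup_eq_top_of_mem {σ τ : Finset (Fin N)} (htop : σ.inf H ⊔ τ.inf H = ⊤)
    {i k : Fin N} (hi : i ∈ σ) (hk : k ∈ τ) : H i ⊔ H k = ⊤ :=
  top_le_iff.mp (htop ▸ sup_le_sup (Finset.inf_le hi) (Finset.inf_le hk))

theorem dualBdry_triple {a b c : Fin N} (hab : a ≠ b) (hac : a ≠ c) (hbc : b ≠ c)
    (hac_bot : H a ⊓ H c = ⊥) (hab_bot : H a ⊓ H b ≠ ⊥) (hbc_bot : H b ⊓ H c ≠ ⊥) :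
    dualBdry H {a, b, c} = Finsupp.single {a, c} 1 := by
  have hinf : ({a, b, c} : Finset (Fin N)).inf H = ⊥ :=
    le_bot_iff.mp (hac_bot ▸ le_inf (Finset.inf_le (by simp)) (Finset.inf_le (by simp)))
  have erase_a : ({a, b, c} : Finset (Fin N)).erase a = {b, c} := by
    ext x; simp only [Finset.mem_erase, Finset.mem_insert, Finset.mem_singleton]; grind
  have erase_b : ({a, b, c} : Finset (Fin N)).erase b = {a, c} := by
    ext x; simp only [Finset.mem_erase, Finset.mem_insert, Finset.mem_singleton]; grind
  have erase_c : ({a, b, c} : Finset (Fin N)).erase c = {a, b} := by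
    ext x; simp only [Finset.mem_erase, Finset.mem_insert, Finset.mem_singleton]; grind
  have hfilter : ({a, b, c} : Finset (Fin N)).filter
      (fun j => (({a, b, c} : Finset (Fin N)).erase j).inf H = ({a, b, c} : Finset (Fin N)).inf H)
      = {b} := by
    ext j
    simp only [Finset.mem_filter, Finset.mem_insert, Finset.mem_singleton, hinf]
    constructor
    · rintro ⟨rfl | rfl | rfl, h⟩
      · simp [erase_a, hbc_bot] at h
      · rfl
      · simp [erase_c, hab_bot] at h
    · rintro rfl
      simp [erase_b, hac_bot]
  rw [dualBdry, hfilter, Finset.sum_singleton, erase_b]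

end Arrangement

theorem exists_eq_singleton_of_forall_eq_apply {α β : Type*} {σ : Finset α} {τ : Finset β}
    (hσ : σ.Nonempty) (hτ : τ.Nonempty) {f : α → β} (hf : Function.Injective f)
    (h : ∀ i ∈ σ, ∀ k ∈ τ, k = f i) : ∃ i, σ = {i} ∧ τ = {f i} := by
  obtain ⟨i, hi⟩ := hσ
  obtain ⟨k, hk⟩ := hτ
  refine ⟨i, Finset.eq_singleton_iff_unique_mem.mpr ⟨hi, fun i' hi' => ?_⟩,
    Finset.eq_singleton_iff_unique_mem.mpr ⟨h i hi k hk ▸ hk, h i hi⟩⟩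
  exact hf ((h i' hi' k hk).symm.trans (h i hi k hk))

def coordHyperplane {ι : Type*} (c : ℝ) (a b : ι) : Submodule ℝ (ι → ℝ) :=
  LinearMap.ker (LinearMap.proj a - c • LinearMap.proj b)

theorem mem_coordHyperplane {ι : Type*} {c : ℝ} {a b : ι} {v : ι → ℝ} :
    v ∈ coordHyperplane c a b ↔ v a = c * v b := by
  simp [coordHyperplane, sub_eq_zero]

theorem coordHyperplane_ne_top {ι : Type*} [DecidableEq ι] (c : ℝ) {a b : ι} (hab : a ≠ b) :
    coordHyperplane c a b ≠ ⊤ := by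
  intro h
  have := (Submodule.eq_top_iff'.mp h) (Pi.single a 1)
  simp [mem_coordHyperplane, hab.symm] at this

def signPlane (s t : ℤˣ) : Submodule ℝ (Fin 4 → ℝ) :=
  coordHyperplane ((s : ℤ) : ℝ) 0 2 ⊓ coordHyperplane ((t : ℤ) : ℝ) 1 3

theorem mem_signPlane {s t : ℤˣ} {v : Fin 4 → ℝ} :
    v ∈ signPlane s t ↔ v 0 = (s : ℤ) * v 2 ∧ v 1 = (t : ℤ) * v 3 := by
  simp only [signPlane, Submodule.mem_inf, mem_coordHyperplane]

theorem signPlane_sup_ne_top_of_fst_eq (s t t' : ℤˣ) : signPlane s t ⊔ signPlane s t' ≠ ⊤ :=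
  ne_top_of_le_ne_top (coordHyperplane_ne_top _ (by decide)) (sup_le inf_le_left inf_le_left)

theorem signPlane_sup_ne_top_of_snd_eq (s s' t : ℤˣ) : signPlane s t ⊔ signPlane s' t ≠ ⊤ :=
  ne_top_of_le_ne_top (coordHyperplane_ne_top _ (by decide)) (sup_le inf_le_right inf_le_right)

theorem signPlane_inf_ne_bot_of_fst_eq (s t t' : ℤˣ) : signPlane s t ⊓ signPlane s t' ≠ ⊥ := by
  rw [Submodule.ne_bot_iff]
  exact ⟨![(s : ℤ), 0, 1, 0], by simp [mem_signPlane], fun h => by simpa using congrFun h 2⟩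

theorem signPlane_inf_ne_bot_of_snd_eq (s s' t : ℤˣ) : signPlane s t ⊓ signPlane s' t ≠ ⊥ := by
  rw [Submodule.ne_bot_iff]
  exact ⟨![0, (t : ℤ), 0, 1], by simp [mem_signPlane], fun h => by simpa using congrFun h 3⟩

theorem signPlane_inf_signPlane_neg (s t : ℤˣ) : signPlane s t ⊓ signPlane (-s) (-t) = ⊥ := by
  refine (Submodule.eq_bot_iff _).mpr fun v hv => ?_
  simp only [Submodule.mem_inf, mem_signPlane, Units.val_neg, Int.cast_neg] at hv
  obtain ⟨⟨h0, h1⟩, h0', h1'⟩ := hv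
  have h2 : v 2 = 0 :=
    (mul_eq_zero.mp (by linarith : ((s : ℤ) : ℝ) * v 2 = 0)).resolve_left (by simp)
  have h3 : v 3 = 0 :=
    (mul_eq_zero.mp (by linarith : ((t : ℤ) : ℝ) * v 3 = 0)).resolve_left (by simp)
  funext j
  fin_cases j <;> simp [h0, h1, h2, h3]

def planeSign : Fin 4 → ℤˣ × ℤˣ := ![(1, 1), (1, -1), (-1, -1), (-1, 1)]

section FourPlanes

variable (H : Fin 4 → Submodule ℝ (Fin 4 → ℝ))
  (hH : ∀ i, (H i : Set (Fin 4 → ℝ)) = planeSet i)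
include hH

theorem eq_signPlane_planeSign (i : Fin 4) : H i = signPlane (planeSign i).1 (planeSign i).2 := by
  refine SetLike.coe_injective ((hH i).trans ?_)
  ext v
  fin_cases i <;> simp [planeSet, planeSign, mem_signPlane]

theorem eq_add_two_of_sup_eq_top {i k : Fin 4} (htop : H i ⊔ H k = ⊤) : k = i + 2 := by
  have key : ∀ a b : Fin 4,
      (planeSign a).1 = (planeSign b).1 ∨ (planeSign a).2 = (planeSign b).2 ∨ b = a + 2 := by
    decide
  rw [eq_signPlane_planeSign H hH i, eq_signPlane_planeSign H hH k] at htop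
  rcases key i k with h | h | h
  · exact absurd htop (h ▸ signPlane_sup_ne_top_of_fst_eq _ _ _)
  · exact absurd htop (h ▸ signPlane_sup_ne_top_of_snd_eq _ _ _)
  · exact h

theorem inf_add_two_eq_bot (i : Fin 4) : H i ⊓ H (i + 2) = ⊥ := by
  have : planeSign (i + 2) = -planeSign i := by revert i; decide
  rw [eq_signPlane_planeSign H hH, eq_signPlane_planeSign H hH, this]
  exact signPlane_inf_signPlane_neg _ _

theorem inf_add_one_ne_bot (i : Fin 4) : H i ⊓ H (i + 1) ≠ ⊥ := by
  have key : (planeSign i).1 = (planeSign (i + 1)).1 ∨ (planeSign i).2 = (planeSign (i + 1)).2 := by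
    revert i; decide
  rw [eq_signPlane_planeSign H hH, eq_signPlane_planeSign H hH]
  rcases key with h | h
  · exact h ▸ signPlane_inf_ne_bot_of_fst_eq _ _ _
  · exact h ▸ signPlane_inf_ne_bot_of_snd_eq _ _ _

theorem dualBdry_insert_add_one_add_two (i : Fin 4) :
    dualBdry H {i, i + 1, i + 2} = Finsupp.single {i, i + 2} 1 := by
  have hdistinct : i ≠ i + 1 ∧ i ≠ i + 2 ∧ i + 1 ≠ i + 2 := by revert i; decide
  refine dualBdry_triple H hdistinct.1 hdistinct.2.1 hdistinct.2.2 (inf_add_two_eq_bot H hH i)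
    (inf_add_one_ne_bot H hH i) ?_
  rw [show i + 2 = i + 1 + 1 by rw [add_assoc]; rfl]
  exact inf_add_one_ne_bot H hH (i + 1)

end FourPlanes

theorem stmt_14_general (H : Fin 4 → Submodule ℝ (Fin 4 → ℝ))
    (hH : ∀ i, (H i : Set (Fin 4 → ℝ)) = planeSet i)
    (σ τ : Finset (Fin 4)) (hσ : 1 ≤ dualDeg H σ) (hτ : 1 ≤ dualDeg H τ) :
    dualMul H (Finsupp.single σ 1) (Finsupp.single τ 1) ∈
      LinearMap.range (dualD H) := by
  rw [dualMul_single_single, dualMulAux]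
  split_ifs with htop
  · obtain ⟨i, rfl, rfl⟩ := exists_eq_singleton_of_forall_eq_apply
      (nonempty_of_one_le_dualDeg H hσ) (nonempty_of_one_le_dualDeg H hτ) (add_left_injective 2)
      fun i hi k hk => eq_add_two_of_sup_eq_top H hH (sup_eq_top_of_mem H htop hi hk)
    refine ⟨Finsupp.single {i, i + 1, i + 2} 1, ?_⟩
    rw [dualD_single, dualBdry_insert_add_one_add_two H hH, Finset.insert_eq]
  · exact zero_mem _

/-- In the DGA `D̃` of the four-plane example, the product of any two cocycles
of positive degree is a coboundary, i.e. all products of positive-degree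
cohomology classes vanish in `H^*(D̃)`. -/
theorem stmt_14 (H : Fin 4 → Submodule ℝ (Fin 4 → ℝ))
    (hH : ∀ i, (H i : Set (Fin 4 → ℝ)) = planeSet i)
    (σ τ : Finset (Fin 4)) (hσ : 1 ≤ dualDeg H σ) (hτ : 1 ≤ dualDeg H τ)
    (hcσ : dualD H (Finsupp.single σ 1) = 0)
    (hcτ : dualD H (Finsupp.single τ 1) = 0) :
    dualMul H (Finsupp.single σ 1) (Finsupp.single τ 1) ∈
      LinearMap.range (dualD H) :=
  stmt_14_general H hH σ τ hσ hτ
end
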